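/- arXiv:1904.00297 — 5 statements merged into one kernel-verified Lean document; each statement's English description precedes it below -/
import Mathlib

section
/- Let (V^n)_{n≥1} be a sequence of Young measures on Q that K-converges to a Young measure V. Then (V^n) narrowly converges to V; in particular, for every h ∈ L¹(Q;ℝ) and every continuous compactly supported g : ℝ^M → ℝ, ∫_Q h(y) (∫_{ℝ^M} g dV^n_y) dy → ∫_Q h(y) (∫_{ℝ^M} g dV_y) dy as n → ∞. -/
open MeasureTheory Filter Topology

/-- Cesàro-narrow convergence of a sequence of measures: the arithmetic averages
`(1/N) ∑_{k<N} μ k` narrowly converge to `ν`, i.e. the Cesàro means of the integrals of every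
continuous compactly supported test function converge. -/
def CesaroNarrowTendsto {X : Type*} [MeasurableSpace X] [TopologicalSpace X]
    (μ : ℕ → Measure X) (ν : Measure X) : Prop :=
  ∀ g : X → ℝ, Continuous g → HasCompactSupport g →
    Tendsto (fun N : ℕ => (N : ℝ)⁻¹ * ∑ k ∈ Finset.range N, ∫ x, g x ∂(μ k))
      atTop (𝓝 (∫ x, g x ∂ν))

/-- A Young measure on `Q` (with respect to a measure `vol` on `Q`): a weakly-* measurable
family of Borel probability measures parametrized by the points of the physical space. -/
def IsYoungMeasure {Y X : Type*} [MeasurableSpace Y] [MeasurableSpace X] [TopologicalSpace X]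
    (V : Y → Measure X) : Prop :=
  (∀ y, IsProbabilityMeasure (V y)) ∧
  ∀ g : X → ℝ, Continuous g → HasCompactSupport g →
    Measurable fun y => ∫ x, g x ∂(V y)

/-- `K`(Komlós)-convergence of a sequence of Young measures `V n` to `W` with respect to the
measure `vol`: for every subsequence, the Cesàro averages of the parametrized measures narrowly
converge to `W y` for a.e. `y`. -/
def KConverges {Y X : Type*} [MeasurableSpace Y] [MeasurableSpace X] [TopologicalSpace X]
    (vol : Measure Y) (V : ℕ → Y → Measure X) (W : Y → Measure X) : Prop :=
  ∀ φ : ℕ → ℕ, StrictMono φ →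
    ∀ᵐ y ∂vol, CesaroNarrowTendsto (fun k => V (φ k) y) (W y)


lemma cesaro_ge (F : ℕ → ℝ) (c : ℝ) (hc : ∀ k, c ≤ F k) (N : ℕ) (hN : 1 ≤ N) :
    c ≤ (N : ℝ)⁻¹ * ∑ k ∈ Finset.range N, F k := by
  have hNpos : (0:ℝ) < N := by exact_mod_cast hN
  have hsum : (N : ℝ) * c ≤ ∑ k ∈ Finset.range N, F k := by
    calc (N : ℝ) * c = ∑ _k ∈ Finset.range N, c := by
          rw [Finset.sum_const, Finset.card_range, nsmul_eq_mul]
      _ ≤ _ := Finset.sum_le_sum fun k _ => hc k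
  calc c = (N : ℝ)⁻¹ * ((N : ℝ) * c) := by field_simp
    _ ≤ (N : ℝ)⁻¹ * ∑ k ∈ Finset.range N, F k :=
        mul_le_mul_of_nonneg_left hsum (by positivity)

lemma tendsto_of_cesaro_subseq (F : ℕ → ℝ) (A : ℝ)
    (h : ∀ φ : ℕ → ℕ, StrictMono φ →
      Tendsto (fun N : ℕ => (N : ℝ)⁻¹ * ∑ k ∈ Finset.range N, F (φ k)) atTop (𝓝 A)) :
    Tendsto F atTop (𝓝 A) := by
  by_contra hc
  rw [Metric.tendsto_atTop] at hc
  push_neg at hc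
  obtain ⟨ε, hε, hfreq⟩ := hc
  have hfr : ∃ᶠ n in atTop, ε ≤ dist (F n) A := by
    rw [frequently_atTop]
    exact fun N => (hfreq N).imp fun n hn => ⟨hn.1, hn.2⟩
  obtain ⟨φ, hφ, hφd⟩ := Filter.extraction_of_frequently_atTop hfr
  have hsplit : (∃ᶠ k in atTop, A + ε ≤ F (φ k)) ∨ (∃ᶠ k in atTop, F (φ k) ≤ A - ε) := by
    by_contra h'
    push_neg at h'
    have h1 : ∀ᶠ k in atTop, ¬ (A + ε ≤ F (φ k)) := h'.1.mono fun k hk => not_le.mpr hk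
    have h2 : ∀ᶠ k in atTop, ¬ (F (φ k) ≤ A - ε) := h'.2.mono fun k hk => not_le.mpr hk
    have := ((h1.and h2).and (Eventually.of_forall hφd)).exists
    obtain ⟨k, ⟨hk1, hk2⟩, hk3⟩ := this
    push_neg at hk1 hk2
    rw [Real.dist_eq] at hk3
    exact absurd hk3 (not_le.mpr (abs_lt.mpr ⟨by linarith, by linarith⟩))
  rcases hsplit with hs | hs
  · obtain ⟨ψ, hψ, hψd⟩ := Filter.extraction_of_frequently_atTop hs
    have hT := h (φ ∘ ψ) (hφ.comp hψ)
    rw [Metric.tendsto_atTop] at hT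
    obtain ⟨N₀, hN₀⟩ := hT ε hε
    set N := max N₀ 1
    have hd := hN₀ N (le_max_left _ _)
    have hge := cesaro_ge (fun k => F (φ (ψ k))) (A + ε) (fun k => hψd k) N (le_max_right _ _)
    rw [Real.dist_eq, abs_lt] at hd
    simp only [Function.comp] at hd
    linarith [hge, hd.2]
  · obtain ⟨ψ, hψ, hψd⟩ := Filter.extraction_of_frequently_atTop hs
    have hT := h (φ ∘ ψ) (hφ.comp hψ)
    rw [Metric.tendsto_atTop] at hT
    obtain ⟨N₀, hN₀⟩ := hT ε hε
    set N := max N₀ 1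
    have hd := hN₀ N (le_max_left _ _)
    have hge := cesaro_ge (fun k => -F (φ (ψ k))) (-(A - ε)) (fun k => by simpa using neg_le_neg (hψd k)) N
      (le_max_right _ _)
    rw [Real.dist_eq, abs_lt] at hd
    simp only [Function.comp] at hd
    simp only [Finset.sum_neg_distrib, mul_neg] at hge
    linarith [hge, hd.1]

/-- **K-convergence implies narrow convergence of Young measures.** If a sequence of Young
measures `V n` on a bounded measurable set `Q ⊆ ℝ^K` K-converges to a Young measure `W`, then
it narrowly converges to `W`: for every `h ∈ L¹(Q)` and every continuous compactly supported
`g : ℝ^M → ℝ` the integrals `∫_Q h(y) ⟨V^n_y; g⟩ dy` converge to `∫_Q h(y) ⟨V_y; g⟩ dy`. -/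
theorem kconvergence_implies_narrow_convergence (K M : ℕ)
    (Q : Set (EuclideanSpace ℝ (Fin K))) (hQm : MeasurableSet Q)
    (hQb : Bornology.IsBounded Q)
    (V : ℕ → EuclideanSpace ℝ (Fin K) → Measure (EuclideanSpace ℝ (Fin M)))
    (W : EuclideanSpace ℝ (Fin K) → Measure (EuclideanSpace ℝ (Fin M)))
    (hV : ∀ n, IsYoungMeasure (V n)) (hW : IsYoungMeasure W)
    (hK : KConverges (volume.restrict Q) V W) :
    ∀ h : EuclideanSpace ℝ (Fin K) → ℝ, Integrable h (volume.restrict Q) →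
      ∀ g : EuclideanSpace ℝ (Fin M) → ℝ, Continuous g → HasCompactSupport g →
        Tendsto (fun n => ∫ y in Q, h y * ∫ x, g x ∂(V n y) ∂volume)
          atTop (𝓝 (∫ y in Q, h y * ∫ x, g x ∂(W y) ∂volume)) := by
  intro h hh g hgc hgs
  obtain ⟨C, hC⟩ := hgs.exists_bound_of_continuous hgc
  have hC0 : 0 ≤ C := le_trans (norm_nonneg _) (hC 0)
  -- bound on integrals of g against probability measures
  have hIbd : ∀ (μ : Measure (EuclideanSpace ℝ (Fin M))), IsProbabilityMeasure μ →
      ‖∫ x, g x ∂μ‖ ≤ C := by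
    intro μ hμ
    calc ‖∫ x, g x ∂μ‖ ≤ C * (μ Set.univ).toReal :=
          norm_integral_le_of_norm_le_const (Eventually.of_forall fun x => hC x)
      _ = C := by simp
  -- integrability of each h * ⟨V n, g⟩
  have hInt : ∀ n, Integrable (fun y => h y * ∫ x, g x ∂(V n y)) (volume.restrict Q) := by
    intro n
    refine Integrable.mono' (hh.norm.const_mul C)
      (hh.aestronglyMeasurable.mul ((hV n).2 g hgc hgs).aestronglyMeasurable) ?_
    filter_upwards with y
    rw [norm_mul]
    calc ‖h y‖ * ‖∫ x, g x ∂(V n y)‖ ≤ ‖h y‖ * C :=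
          mul_le_mul_of_nonneg_left (hIbd _ ((hV n).1 y)) (norm_nonneg _)
      _ = C * ‖h y‖ := mul_comm _ _
  apply tendsto_of_cesaro_subseq
  intro φ hφ
  have hae := hK φ hφ
  -- rewrite the Cesàro average of integrals as an integral
  have heq : ∀ N : ℕ, (N : ℝ)⁻¹ * ∑ k ∈ Finset.range N, ∫ y in Q, h y * ∫ x, g x ∂(V (φ k) y) ∂volume
      = ∫ y in Q, h y * ((N : ℝ)⁻¹ * ∑ k ∈ Finset.range N, ∫ x, g x ∂(V (φ k) y)) ∂volume := by
    intro N
    rw [← integral_finset_sum _ (fun k _ => hInt (φ k)), ← integral_const_mul]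
    refine integral_congr_ae (Eventually.of_forall fun y => ?_)
    simp only [Finset.mul_sum]
    exact Finset.sum_congr rfl fun k _ => by ring
  simp only [heq]
  -- dominated convergence
  apply tendsto_integral_of_dominated_convergence (fun y => C * ‖h y‖)
  · intro N
    exact (hh.aestronglyMeasurable.mul
      (((Finset.range N).measurable_sum (fun k _ => ((hV (φ k)).2 g hgc hgs))).const_mul
        _).aestronglyMeasurable)
  · exact hh.norm.const_mul C
  · intro N
    filter_upwards with y
    rcases Nat.eq_zero_or_pos N with hN | hN
    · simp [hN]; positivity
    rw [norm_mul]
    have : ‖(N : ℝ)⁻¹ * ∑ k ∈ Finset.range N, ∫ x, g x ∂(V (φ k) y)‖ ≤ C := by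
      rw [norm_mul, norm_inv, Real.norm_natCast]
      calc (N : ℝ)⁻¹ * ‖∑ k ∈ Finset.range N, ∫ x, g x ∂(V (φ k) y)‖
          ≤ (N : ℝ)⁻¹ * (N * C) := by
            refine mul_le_mul_of_nonneg_left ?_ (by positivity)
            calc ‖∑ k ∈ Finset.range N, ∫ x, g x ∂(V (φ k) y)‖
                ≤ ∑ k ∈ Finset.range N, ‖∫ x, g x ∂(V (φ k) y)‖ := norm_sum_le _ _
              _ ≤ ∑ _k ∈ Finset.range N, C :=
                  Finset.sum_le_sum fun k _ => hIbd _ ((hV (φ k)).1 y)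
              _ = N * C := by rw [Finset.sum_const, Finset.card_range, nsmul_eq_mul]
        _ = C := by
            have : (N : ℝ) ≠ 0 := by positivity
            field_simp
    calc ‖h y‖ * ‖(N : ℝ)⁻¹ * ∑ k ∈ Finset.range N, ∫ x, g x ∂(V (φ k) y)‖
        ≤ ‖h y‖ * C := mul_le_mul_of_nonneg_left this (norm_nonneg _)
      _ = C * ‖h y‖ := mul_comm _ _
  · filter_upwards [hae] with y hy
    exact (tendsto_const_nhds.mul (hy g hgc hgs))
end

section
/- Let (U_n)_{n≥1} converge strongly in L¹(Q;ℝ^M) to U ∈ L¹(Q;ℝ^M). Then (U_n) strong-K converges to U: whenever (n_k) is a subsequence such that the Dirac Young measures δ_{U_{n_k}} K-converge to a Young measure V, then V_y = δ_{U(y)} (the Dirac mass at U(y)) for almost every y ∈ Q. -/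
open MeasureTheory Filter Topology

open scoped ENNReal

/-- A probability measure whose integral against every continuous compactly supported function
is evaluation at `x` must be the Dirac mass at `x`. -/
lemma aux_eq_dirac {M : ℕ} (μ : Measure (EuclideanSpace ℝ (Fin M))) [IsProbabilityMeasure μ]
    (x : EuclideanSpace ℝ (Fin M))
    (h : ∀ g : EuclideanSpace ℝ (Fin M) → ℝ, Continuous g → HasCompactSupport g →
      ∫ z, g z ∂μ = g x) : μ = Measure.dirac x := by
  -- Step 1: every closed ball around `x` has full measure.
  have hball : ∀ ε : ℝ, 0 < ε → μ (Metric.closedBall x ε) = 1 := by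
    intro ε hε
    set g : EuclideanSpace ℝ (Fin M) → ℝ := fun z => max (1 - ‖z - x‖ / ε) 0 with hg
    have hgcont : Continuous g := by
      exact (continuous_const.sub (((continuous_id.sub continuous_const).norm).div_const ε)).max
        continuous_const
    have hgzero : ∀ z ∉ Metric.closedBall x ε, g z = 0 := by
      intro z hz
      have hz' : ε < ‖z - x‖ := by
        simpa [Metric.mem_closedBall, dist_eq_norm, not_le] using hz
      have : 1 - ‖z - x‖ / ε ≤ 0 := by
        have : 1 < ‖z - x‖ / ε := (one_lt_div hε).2 hz'
        linarith
      simp [hg, max_eq_right this]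
    have hgsupp : HasCompactSupport g :=
      HasCompactSupport.intro (isCompact_closedBall x ε) hgzero
    have hgx : g x = 1 := by simp [hg, hε.le]
    have hgle : ∀ z, g z ≤ (Metric.closedBall x ε).indicator (fun _ => (1 : ℝ)) z := by
      intro z
      by_cases hz : z ∈ Metric.closedBall x ε
      · rw [Set.indicator_of_mem hz]
        have h1 : 1 - ‖z - x‖ / ε ≤ 1 := by
          have : 0 ≤ ‖z - x‖ / ε := div_nonneg (norm_nonneg _) hε.le
          linarith
        exact max_le h1 zero_le_one
      · rw [Set.indicator_of_notMem hz, hgzero z hz]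
    have hgint : Integrable g μ := hgcont.integrable_of_hasCompactSupport hgsupp
    have hindint : Integrable ((Metric.closedBall x ε).indicator (fun _ => (1 : ℝ))) μ :=
      (integrable_const (1 : ℝ)).indicator measurableSet_closedBall
    have hle : ∫ z, g z ∂μ ≤ ∫ z, (Metric.closedBall x ε).indicator (fun _ => (1 : ℝ)) z ∂μ :=
      integral_mono hgint hindint hgle
    rw [h g hgcont hgsupp, hgx, integral_indicator_const (1 : ℝ)
      measurableSet_closedBall] at hle
    have htoReal : (μ (Metric.closedBall x ε)).toReal = 1 := by
      have h2 : (μ (Metric.closedBall x ε)).toReal ≤ 1 := by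
        have := prob_le_one (μ := μ) (s := Metric.closedBall x ε)
        exact ENNReal.toReal_le_of_le_ofReal zero_le_one (by simpa using this)
      have h1 : (1 : ℝ) ≤ (μ (Metric.closedBall x ε)).toReal := by
          have := hle; simp at this; exact this
      linarith
    have hne : μ (Metric.closedBall x ε) ≠ ⊤ := measure_ne_top μ _
    rw [← ENNReal.ofReal_toReal hne, htoReal]
    simp
  -- Step 2: μ {x} = 1.
  have hsingle : μ {x} = 1 := by
    have hInter : (⋂ n : ℕ, Metric.closedBall x ((n : ℝ) + 1)⁻¹) = {x} := by
      ext z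
      simp only [Set.mem_iInter, Metric.mem_closedBall, Set.mem_singleton_iff]
      constructor
      · intro hz
        by_contra hne
        have hpos : 0 < dist z x := dist_pos.mpr hne
        obtain ⟨n, hn⟩ := exists_nat_one_div_lt hpos
        have := hz n
        rw [one_div] at hn
        linarith
      · intro hz n
        rw [hz]
        simp [inv_nonneg]
        positivity
    have hmono : Antitone fun n : ℕ => Metric.closedBall x ((n : ℝ) + 1)⁻¹ := by
      intro a b hab
      apply Metric.closedBall_subset_closedBall
      have : (a : ℝ) + 1 ≤ (b : ℝ) + 1 := by exact_mod_cast by omega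
      exact inv_anti₀ (by positivity) this
    have htend := tendsto_measure_iInter_atTop
      (fun n => measurableSet_closedBall.nullMeasurableSet) hmono
      ⟨0, measure_ne_top μ _⟩
    rw [hInter] at htend
    have hconst : Tendsto (fun n : ℕ => μ (Metric.closedBall x ((n : ℝ) + 1)⁻¹)) atTop (𝓝 1) := by
      have : (fun n : ℕ => μ (Metric.closedBall x ((n : ℝ) + 1)⁻¹)) = fun _ => 1 := by
        funext n
        exact hball _ (by positivity)
      rw [this]
      exact tendsto_const_nhds
    exact tendsto_nhds_unique htend hconst
  -- Step 3: conclude μ = dirac x.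
  ext s hs
  rw [Measure.dirac_apply' x hs]
  by_cases hx : x ∈ s
  · rw [Set.indicator_of_mem hx]
    refine le_antisymm (prob_le_one) ?_
    calc (1 : ℝ≥0∞) = μ {x} := hsingle.symm
      _ ≤ μ s := measure_mono (Set.singleton_subset_iff.2 hx)
  · rw [Set.indicator_of_notMem hx]
    have hsub : s ⊆ ({x} : Set _)ᶜ := fun z hz => by
      simp only [Set.mem_compl_iff, Set.mem_singleton_iff]
      rintro rfl; exact hx hz
    have : μ ({x} : Set _)ᶜ = 0 := by
      rw [prob_compl_eq_one_sub (measurableSet_singleton x), hsingle, tsub_self]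
    exact le_antisymm (le_trans (measure_mono hsub) this.le) zero_le

/-- **Strong L¹ convergence implies strong-K convergence.** If `U n → Ulim` strongly in
`L¹(Q; ℝ^M)`, then whenever the Dirac Young measures of a subsequence K-converge to a Young
measure `W`, one has `W y = δ_{Ulim y}` for a.e. `y ∈ Q`. -/
theorem strongL1_implies_strongK_convergence (K M : ℕ)
    (Q : Set (EuclideanSpace ℝ (Fin K))) (hQm : MeasurableSet Q)
    (hQb : Bornology.IsBounded Q)
    (U : ℕ → EuclideanSpace ℝ (Fin K) → EuclideanSpace ℝ (Fin M))
    (Ulim : EuclideanSpace ℝ (Fin K) → EuclideanSpace ℝ (Fin M))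
    (hmeas : ∀ n, Measurable (U n))
    (hInt : ∀ n, IntegrableOn (U n) Q volume)
    (hIntLim : IntegrableOn Ulim Q volume)
    (hstrong : Tendsto (fun n => ∫ y in Q, ‖U n y - Ulim y‖ ∂volume) atTop (𝓝 0))
    (ψ : ℕ → ℕ) (hψ : StrictMono ψ)
    (W : EuclideanSpace ℝ (Fin K) → Measure (EuclideanSpace ℝ (Fin M)))
    (hW : IsYoungMeasure W)
    (hK : KConverges (volume.restrict Q) (fun k y => Measure.dirac (U (ψ k) y)) W) :
    ∀ᵐ y ∂(volume.restrict Q), W y = Measure.dirac (Ulim y) := by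
  classical
  set μ := volume.restrict Q with hμdef
  -- L¹ convergence gives convergence in measure.
  have hTM : TendstoInMeasure μ U atTop Ulim := by
    refine tendstoInMeasure_of_tendsto_eLpNorm (p := 1) one_ne_zero
      (fun n => (hmeas n).aestronglyMeasurable) hIntLim.aestronglyMeasurable ?_
    have heq : ∀ n, eLpNorm (U n - Ulim) 1 μ
        = ENNReal.ofReal (∫ y in Q, ‖U n y - Ulim y‖ ∂volume) := by
      intro n
      rw [eLpNorm_one_eq_lintegral_enorm,
        ← ofReal_integral_norm_eq_lintegral_enorm ((hInt n).sub hIntLim)]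
      rfl
    simp_rw [heq]
    rw [show (0 : ℝ≥0∞) = ENNReal.ofReal 0 by simp]
    exact ENNReal.tendsto_ofReal hstrong
  have hTM2 : TendstoInMeasure μ (fun k => U (ψ k)) atTop Ulim :=
    fun ε hε => (hTM ε hε).comp hψ.tendsto_atTop
  obtain ⟨φ, hφ, hae⟩ := hTM2.exists_seq_tendsto_ae
  have hKae := hK φ hφ
  filter_upwards [hae, hKae] with y hy hCy
  have hprob : IsProbabilityMeasure (W y) := hW.1 y
  refine aux_eq_dirac (W y) (Ulim y) fun g hg hgc => ?_
  have h1 := hCy g hg hgc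
  have h2 : Tendsto (fun k => ∫ x, g x ∂(Measure.dirac (U (ψ (φ k)) y))) atTop
      (𝓝 (g (Ulim y))) := by
    simp_rw [integral_dirac]
    exact (hg.tendsto _).comp hy
  have h3 := h2.cesaro
  have h3' : Tendsto (fun N : ℕ => (N : ℝ)⁻¹ *
      ∑ k ∈ Finset.range N, ∫ x, g x ∂(Measure.dirac (U (ψ (φ k)) y))) atTop
      (𝓝 (g (Ulim y))) := by
    simpa [smul_eq_mul] using h3
  exact tendsto_nhds_unique h1 h3'
end

section
/- Let (U_n)_{n≥1} be measurable functions from Q to ℝ^M with sup_n ∫_Q |U_n| dy < ∞, and let U ∈ L¹(Q;ℝ^M). Suppose that for every h ∈ L^∞(Q;ℝ) and every continuous compactly supported g : ℝ^M → ℝ, ∫_Q h(y) g(U_n(y)) dy → ∫_Q h(y) g(U(y)) dy as n → ∞. Then U_n → U in (Lebesgue) measure on Q. -/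
open MeasureTheory Filter Topology

namespace NarrowAux

variable {M : ℕ}

noncomputable def bump (ε : ℝ) (c v : EuclideanSpace ℝ (Fin M)) : ℝ :=
  max 0 (1 - (2 / ε) * ‖v - c‖)

lemma bump_nonneg (ε : ℝ) (c v : EuclideanSpace ℝ (Fin M)) : 0 ≤ bump ε c v :=
  le_max_left _ _

lemma bump_le_one {ε : ℝ} (hε : 0 < ε) (c v : EuclideanSpace ℝ (Fin M)) :
    bump ε c v ≤ 1 := by
  have h : 0 ≤ (2 / ε) * ‖v - c‖ := by positivity
  exact max_le (by norm_num) (by linarith)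

lemma bump_continuous (ε : ℝ) (c : EuclideanSpace ℝ (Fin M)) :
    Continuous (bump ε c) := by
  unfold bump
  fun_prop

lemma bump_compactSupport {ε : ℝ} (hε : 0 < ε) (c : EuclideanSpace ℝ (Fin M)) :
    HasCompactSupport (bump ε c) := by
  apply HasCompactSupport.intro (isCompact_closedBall c (ε / 2))
  intro v hv
  rw [Metric.mem_closedBall, not_le, dist_eq_norm] at hv
  have h2 : (1 : ℝ) < (2 / ε) * ‖v - c‖ := by
    rw [div_mul_eq_mul_div, lt_div_iff₀ hε]
    nlinarith
  unfold bump
  rw [max_eq_left]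
  linarith

lemma bump_pos_imp {ε : ℝ} (hε : 0 < ε) {c v : EuclideanSpace ℝ (Fin M)}
    (h : 0 < bump ε c v) : ‖v - c‖ < ε / 2 := by
  by_contra hc
  push_neg at hc
  have h2 : (1 : ℝ) ≤ (2 / ε) * ‖v - c‖ := by
    rw [div_mul_eq_mul_div, le_div_iff₀ hε]; nlinarith
  unfold bump at h
  rw [max_eq_left (by linarith)] at h
  linarith

lemma bump_ge {ε η : ℝ} (hε : 0 < ε) {c v : EuclideanSpace ℝ (Fin M)}
    (h : ‖v - c‖ ≤ η) : 1 - 2 * η / ε ≤ bump ε c v := by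
  have h2 : (2 / ε) * ‖v - c‖ ≤ 2 * η / ε := by
    rw [div_mul_eq_mul_div, div_le_div_iff₀ hε hε]
    nlinarith
  calc 1 - 2 * η / ε ≤ 1 - (2 / ε) * ‖v - c‖ := by linarith
    _ ≤ bump ε c v := le_max_right _ _

lemma integrable_of_bound {α : Type*} [MeasurableSpace α] {μ : Measure α}
    [IsFiniteMeasure μ] {f : α → ℝ} (hf : Measurable f) (B : ℝ)
    (hB : ∀ y, |f y| ≤ B) : Integrable f μ :=
  (integrable_const B).mono' hf.aestronglyMeasurable
    (Filter.Eventually.of_forall (by simpa using hB))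

lemma exists_simpleFunc_close {α β : Type*} [MeasurableSpace α]
    [MeasurableSpace β] [MetricSpace β] [BorelSpace β]
    [SecondCountableTopology β] [Zero β]
    {μ : Measure α} [IsFiniteMeasure μ] {f : α → β} (hf : Measurable f)
    {η δ : ℝ} (hη : 0 < η) (hδ : 0 < δ) :
    ∃ s : SimpleFunc α β, μ {x | η ≤ dist (s x) (f x)} ≤ ENNReal.ofReal δ := by
  have hTIM : TendstoInMeasure μ
      (fun k => SimpleFunc.approxOn f hf Set.univ 0 (Set.mem_univ 0) k) atTop f :=
    tendstoInMeasure_of_tendsto_ae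
      (fun k => (SimpleFunc.approxOn f hf Set.univ 0 (Set.mem_univ 0)
        k).aestronglyMeasurable)
      (Filter.Eventually.of_forall fun x =>
        SimpleFunc.tendsto_approxOn hf _ (by simp))
  have hTIM' := (tendstoInMeasure_iff_dist.1 hTIM) η hη
  rw [ENNReal.tendsto_atTop_zero] at hTIM'
  obtain ⟨k, hk⟩ := hTIM' (ENNReal.ofReal δ) (ENNReal.ofReal_pos.2 hδ)
  exact ⟨SimpleFunc.approxOn f hf Set.univ 0 (Set.mem_univ 0) k, hk k le_rfl⟩

end NarrowAux

set_option maxHeartbeats 2000000 in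
open NarrowAux in
/-- **Narrow convergence of Dirac Young measures implies convergence in measure.** If the
measurable functions `U n` are bounded in `L¹(Q; ℝ^M)` and
`∫_Q h(y) g(U n y) dy → ∫_Q h(y) g(U y) dy` for every `h ∈ L^∞(Q)` and every continuous
compactly supported `g : ℝ^M → ℝ`, then `U n → U` in Lebesgue measure on `Q`. -/
theorem narrow_implies_convergence_in_measure (K M : ℕ)
    (Q : Set (EuclideanSpace ℝ (Fin K))) (hQm : MeasurableSet Q)
    (hQb : Bornology.IsBounded Q)
    (U : ℕ → EuclideanSpace ℝ (Fin K) → EuclideanSpace ℝ (Fin M))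
    (Ulim : EuclideanSpace ℝ (Fin K) → EuclideanSpace ℝ (Fin M))
    (hmeas : ∀ n, Measurable (U n)) (hmeaslim : Measurable Ulim)
    (hInt : ∀ n, IntegrableOn (U n) Q volume)
    (hIntLim : IntegrableOn Ulim Q volume)
    (C : ℝ) (hC : ∀ n, ∫ y in Q, ‖U n y‖ ∂volume ≤ C)
    (hnarrow : ∀ h : EuclideanSpace ℝ (Fin K) → ℝ, Measurable h → (∃ B, ∀ y, |h y| ≤ B) →
      ∀ g : EuclideanSpace ℝ (Fin M) → ℝ, Continuous g → HasCompactSupport g →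
        Tendsto (fun n => ∫ y in Q, h y * g (U n y) ∂volume) atTop
          (𝓝 (∫ y in Q, h y * g (Ulim y) ∂volume))) :
    ∀ ε > (0 : ℝ),
      Tendsto (fun n => volume {y ∈ Q | ε < ‖U n y - Ulim y‖}) atTop (𝓝 0) := by
  classical
  intro ε hε
  have hQfin : volume Q < ⊤ := hQb.measure_lt_top
  haveI : IsFiniteMeasure (volume.restrict Q) :=
    ⟨by rwa [Measure.restrict_apply_univ]⟩
  set T : ℝ := (volume Q).toReal with hTdef
  have hT0 : 0 ≤ T := ENNReal.toReal_nonneg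
  rw [ENNReal.tendsto_atTop_zero]
  intro δ₀ hδ₀
  set δ : ℝ := if δ₀ = ⊤ then 1 else δ₀.toReal with hδdef
  have hδpos : 0 < δ := by
    by_cases h : δ₀ = ⊤
    · simp [hδdef, h]
    · simp only [hδdef, h, if_false]
      exact ENNReal.toReal_pos (ne_of_gt hδ₀) h
  have hδle : ENNReal.ofReal δ ≤ δ₀ := by
    by_cases h : δ₀ = ⊤
    · simp [h]
    · simp only [hδdef, h, if_false]
      rw [ENNReal.ofReal_toReal h]
  suffices H : ∃ N, ∀ n ≥ N,
      volume {y ∈ Q | ε < ‖U n y - Ulim y‖} ≤ ENNReal.ofReal δ by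
    obtain ⟨N, hN⟩ := H
    exact ⟨N, fun n hn => (hN n hn).trans hδle⟩
  -- choose the small parameter η
  set η : ℝ := min (ε / 4) (ε * δ / (8 * T + 8)) with hηdef
  have hη0 : 0 < η := lt_min (by positivity) (by positivity)
  have hη1 : η ≤ ε / 4 := min_le_left _ _
  have hη2 : 2 * η / ε * T ≤ δ / 4 := by
    have h2 : η ≤ ε * δ / (8 * T + 8) := min_le_right _ _
    have h3 : η * (8 * T + 8) ≤ ε * δ := (le_div_iff₀ (by positivity)).1 h2
    rw [show 2 * η / ε * T = 2 * η * T / ε by ring, div_le_iff₀ hε]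
    nlinarith
  -- choose a simple-function approximation of Ulim, good except on a small set E
  obtain ⟨sk, hk⟩ := exists_simpleFunc_close (μ := volume.restrict Q) hmeaslim hη0
    (show (0:ℝ) < δ / 4 by positivity)
  set E : Set (EuclideanSpace ℝ (Fin K)) := {x | η ≤ dist (sk x) (Ulim x)} with hEdef
  have hEmeas : MeasurableSet E :=
    measurableSet_le measurable_const (sk.measurable.dist hmeaslim)
  have hkE : volume (Q ∩ E) ≤ ENNReal.ofReal (δ / 4) := by
    have := hk
    rwa [Measure.restrict_apply hEmeas, Set.inter_comm] at this
  have hQEfin : volume (Q ∩ E) ≠ ⊤ :=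
    ne_of_lt (lt_of_le_of_lt (measure_mono Set.inter_subset_left) hQfin)
  set e : ℝ := (volume (Q ∩ E)).toReal with hedef
  have he0 : 0 ≤ e := ENNReal.toReal_nonneg
  have he : e ≤ δ / 4 := by
    rw [hedef]
    exact ENNReal.toReal_le_of_le_ofReal (by positivity) hkE
  have heT : e ≤ T := ENNReal.toReal_mono (ne_of_lt hQfin)
    (measure_mono Set.inter_subset_left)
  -- the composite test function
  set Φ : (EuclideanSpace ℝ (Fin K) → EuclideanSpace ℝ (Fin M)) →
      EuclideanSpace ℝ (Fin K) → ℝ := fun V y => bump ε (sk y) (V y) with hΦdef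
  have hΦmeas : ∀ V : EuclideanSpace ℝ (Fin K) → EuclideanSpace ℝ (Fin M),
      Measurable V → Measurable (Φ V) := by
    intro V hV
    simp only [hΦdef]
    unfold bump
    exact measurable_const.max
      (measurable_const.sub (((hV.sub sk.measurable).norm).const_mul _))
  have hΦ0 : ∀ V y, 0 ≤ Φ V y := fun V y => bump_nonneg _ _ _
  have hΦ1 : ∀ V y, Φ V y ≤ 1 := fun V y => bump_le_one hε _ _
  have hΦint : ∀ V : EuclideanSpace ℝ (Fin K) → EuclideanSpace ℝ (Fin M),
      Measurable V → Integrable (Φ V) (volume.restrict Q) := fun V hV =>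
    integrable_of_bound (hΦmeas V hV) 1 fun y =>
      abs_le.2 ⟨by linarith [hΦ0 V y], hΦ1 V y⟩
  -- indicator bounds
  have hind_bd : ∀ (S : Set (EuclideanSpace ℝ (Fin K))) (y),
      |Set.indicator S (fun _ => (1 : ℝ)) y| ≤ 1 := by
    intro S y
    by_cases h : y ∈ S <;>
      simp [Set.indicator_of_mem, Set.indicator_of_notMem, h]
  have hind_nn : ∀ (S : Set (EuclideanSpace ℝ (Fin K))) (y),
      0 ≤ Set.indicator S (fun _ => (1 : ℝ)) y := by
    intro S y
    by_cases h : y ∈ S <;>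
      simp [Set.indicator_of_mem, Set.indicator_of_notMem, h]
  -- the sum over the range of sk collapses to Φ
  have hsum : ∀ (V : EuclideanSpace ℝ (Fin K) → EuclideanSpace ℝ (Fin M)) (y),
      ∑ c ∈ sk.range, (Set.indicator (sk ⁻¹' {c}) (fun _ => (1 : ℝ)) y)
        * bump ε c (V y) = Φ V y := by
    intro V y
    rw [Finset.sum_eq_single (sk y)]
    · rw [Set.indicator_of_mem (by simp : y ∈ sk ⁻¹' {sk y})]
      simp [hΦdef]
    · intro c _ hne
      rw [Set.indicator_of_notMem (by simp [Set.mem_preimage]; exact fun h => hne h.symm),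
        zero_mul]
    · intro h
      exact absurd (sk.mem_range_self y) h
  -- narrow convergence of each summand
  have hnc : ∀ c ∈ sk.range, Tendsto
      (fun n => ∫ y in Q, (Set.indicator (sk ⁻¹' {c}) (fun _ => (1 : ℝ)) y)
        * bump ε c (U n y) ∂volume) atTop
      (𝓝 (∫ y in Q, (Set.indicator (sk ⁻¹' {c}) (fun _ => (1 : ℝ)) y)
        * bump ε c (Ulim y) ∂volume)) := by
    intro c _
    exact hnarrow _ (measurable_const.indicator (sk.measurableSet_fiber c))
      ⟨1, hind_bd _⟩ _ (bump_continuous ε c) (bump_compactSupport hε c)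
  -- each summand is integrable
  have hsummand_int : ∀ (c : EuclideanSpace ℝ (Fin M))
      (V : EuclideanSpace ℝ (Fin K) → EuclideanSpace ℝ (Fin M)), Measurable V →
      Integrable (fun y => (Set.indicator (sk ⁻¹' {c}) (fun _ => (1 : ℝ)) y)
        * bump ε c (V y)) (volume.restrict Q) := by
    intro c V hV
    refine integrable_of_bound
      ((measurable_const.indicator (sk.measurableSet_fiber c)).mul
        ((bump_continuous ε c).measurable.comp hV)) 1 fun y => ?_
    rw [abs_mul]
    refine mul_le_one₀ (hind_bd _ y) (abs_nonneg _) ?_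
    rw [abs_of_nonneg (bump_nonneg _ _ _)]
    exact bump_le_one hε _ _
  -- convergence of ∫ Φ (U n)
  have key : ∀ (V : EuclideanSpace ℝ (Fin K) → EuclideanSpace ℝ (Fin M)),
      Measurable V →
      ∑ c ∈ sk.range, ∫ y in Q,
        (Set.indicator (sk ⁻¹' {c}) (fun _ => (1 : ℝ)) y) * bump ε c (V y) ∂volume
      = ∫ y in Q, Φ V y ∂volume := by
    intro V hV
    rw [← integral_finset_sum _ (fun c _ => hsummand_int c V hV)]
    exact integral_congr_ae (Filter.Eventually.of_forall fun y => hsum V y)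
  have hFn : Tendsto (fun n => ∫ y in Q, Φ (U n) y ∂volume) atTop
      (𝓝 (∫ y in Q, Φ Ulim y ∂volume)) := by
    have h1 := tendsto_finset_sum sk.range hnc
    rw [key Ulim hmeaslim] at h1
    have h2 : (fun n => ∑ c ∈ sk.range, ∫ y in Q,
        (Set.indicator (sk ⁻¹' {c}) (fun _ => (1 : ℝ)) y) * bump ε c (U n y) ∂volume)
        = fun n => ∫ y in Q, Φ (U n) y ∂volume :=
      funext fun n => key (U n) (hmeas n)
    rwa [h2] at h1
  -- lower bound on the limit integral
  have hQdiff_fin : volume (Q \ E) ≠ ⊤ :=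
    ne_of_lt (lt_of_le_of_lt (measure_mono Set.diff_subset) hQfin)
  have hsplit : (volume (Q \ E)).toReal = T - e := by
    have h1 : volume (Q \ E) + volume (Q ∩ E) = volume Q := measure_diff_add_inter Q hEmeas
    have h2 := congrArg ENNReal.toReal h1
    rw [ENNReal.toReal_add hQdiff_fin hQEfin] at h2
    rw [hedef, hTdef]
    linarith
  have hL : T - e - δ / 4 ≤ ∫ y in Q, Φ Ulim y ∂volume := by
    have step1 : ∫ y in Q \ E, Φ Ulim y ∂volume ≤ ∫ y in Q, Φ Ulim y ∂volume := by
      apply setIntegral_mono_set (hΦint Ulim hmeaslim)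
      · exact Filter.Eventually.of_forall fun y => hΦ0 Ulim y
      · exact (Set.diff_subset : Q \ E ⊆ Q).eventuallyLE
    have step2 : (1 - 2 * η / ε) * (volume (Q \ E)).toReal
        ≤ ∫ y in Q \ E, Φ Ulim y ∂volume := by
      apply setIntegral_ge_of_const_le_real (hQm.diff hEmeas) hQdiff_fin
      · intro x hx
        have hxE : ¬ η ≤ dist (sk x) (Ulim x) := hx.2
        have hd : ‖Ulim x - sk x‖ ≤ η := by
          rw [← dist_eq_norm, dist_comm]
          exact le_of_lt (not_le.1 hxE)
        exact bump_ge hε hd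
      · exact (show IntegrableOn (Φ Ulim) Q volume from hΦint Ulim hmeaslim).mono_set
          Set.diff_subset
    rw [hsplit] at step2
    have hprod : T - e - δ / 4 ≤ (1 - 2 * η / ε) * (T - e) := by
      have h1 : 0 ≤ 2 * η / ε := by positivity
      have h2 : 2 * η / ε * (T - e) ≤ 2 * η / ε * T := by nlinarith
      nlinarith
    linarith
  -- per-n upper bound on the measure of the bad set
  have hUB : ∀ n, (volume {y ∈ Q | ε < ‖U n y - Ulim y‖}).toReal
      ≤ T - (∫ y in Q, Φ (U n) y ∂volume) + e := by
    intro n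
    set A : Set (EuclideanSpace ℝ (Fin K)) := {y | ε < ‖U n y - Ulim y‖} with hAdef
    have hAmeas : MeasurableSet A :=
      measurableSet_lt measurable_const ((hmeas n).sub hmeaslim).norm
    have hbadeq : {y ∈ Q | ε < ‖U n y - Ulim y‖} = Q ∩ A := rfl
    -- pointwise inequality on Q
    have hpt : ∀ y ∈ Q, Φ (U n) y + Set.indicator A (fun _ => (1 : ℝ)) y
        ≤ 1 + Set.indicator E (fun _ => (1 : ℝ)) y := by
      intro y _
      by_cases hyE : y ∈ E
      · rw [Set.indicator_of_mem hyE]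
        have := hΦ1 (U n) y
        have := hind_bd A y
        have := hind_nn A y
        have habs := abs_le.1 (hind_bd A y)
        linarith [habs.2]
      · rw [Set.indicator_of_notMem hyE]
        by_cases hyA : y ∈ A
        · rw [Set.indicator_of_mem hyA]
          have hz : Φ (U n) y = 0 := by
            by_contra h
            have hpos : 0 < Φ (U n) y := lt_of_le_of_ne (hΦ0 (U n) y) (Ne.symm h)
            have h1 : ‖U n y - sk y‖ < ε / 2 := bump_pos_imp hε hpos
            have h2 : dist (sk y) (Ulim y) < η := not_le.1 hyE
            have h3 : ε < ‖U n y - Ulim y‖ := hyA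
            have h4 : ‖U n y - Ulim y‖ ≤ ‖U n y - sk y‖ + ‖sk y - Ulim y‖ :=
              norm_sub_le_norm_sub_add_norm_sub _ _ _
            rw [dist_eq_norm] at h2
            linarith
          rw [hz]
          norm_num
        · rw [Set.indicator_of_notMem hyA, add_zero]
          linarith [hΦ1 (U n) y]
    -- integrate
    have hintA : Integrable (fun y => Set.indicator A (fun _ => (1 : ℝ)) y)
        (volume.restrict Q) :=
      integrable_of_bound (measurable_const.indicator hAmeas) 1 (hind_bd A)
    have hintE : Integrable (fun y => Set.indicator E (fun _ => (1 : ℝ)) y)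
        (volume.restrict Q) :=
      integrable_of_bound (measurable_const.indicator hEmeas) 1 (hind_bd E)
    have hmono : ∫ y in Q, (Φ (U n) y + Set.indicator A (fun _ => (1 : ℝ)) y) ∂volume
        ≤ ∫ y in Q, ((1 : ℝ) + Set.indicator E (fun _ => (1 : ℝ)) y) ∂volume := by
      apply setIntegral_mono_on
      · exact (hΦint (U n) (hmeas n)).add hintA
      · exact (integrable_const 1).add hintE
      · exact hQm
      · exact hpt
    rw [integral_add (hΦint (U n) (hmeas n)) hintA,
      integral_add (integrable_const 1) hintE] at hmono
    have hiA : ∫ y in Q, Set.indicator A (fun _ => (1 : ℝ)) y ∂volume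
        = (volume (Q ∩ A)).toReal := by
      have h := integral_indicator_one (μ := volume.restrict Q) hAmeas
      rw [Measure.real, Measure.restrict_apply hAmeas, Set.inter_comm] at h
      exact h
    have hiE : ∫ y in Q, Set.indicator E (fun _ => (1 : ℝ)) y ∂volume
        = (volume (Q ∩ E)).toReal := by
      have h := integral_indicator_one (μ := volume.restrict Q) hEmeas
      rw [Measure.real, Measure.restrict_apply hEmeas, Set.inter_comm] at h
      exact h
    have hi1 : ∫ _ in Q, (1 : ℝ) ∂volume = T := by
      rw [setIntegral_const, smul_eq_mul, mul_one]
      rfl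
    rw [hiA, hiE, hi1] at hmono
    rw [hbadeq]
    linarith [hmono]
  -- finish
  have hev : ∀ᶠ n in atTop,
      (∫ y in Q, Φ Ulim y ∂volume) - δ / 4 ≤ ∫ y in Q, Φ (U n) y ∂volume :=
    hFn.eventually (eventually_ge_nhds (by linarith))
  obtain ⟨N, hN⟩ := Filter.eventually_atTop.1 hev
  refine ⟨N, fun n hn => ?_⟩
  have hfin : volume {y ∈ Q | ε < ‖U n y - Ulim y‖} ≠ ⊤ :=
    ne_of_lt (lt_of_le_of_lt (measure_mono fun y hy => hy.1) hQfin)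
  rw [← ENNReal.ofReal_toReal hfin]
  apply ENNReal.ofReal_le_ofReal
  have h1 := hUB n
  have h2 := hN n hn
  linarith
end

section
/- Let (U_n)_{n≥1} and U be measurable functions from Q to ℝ^M such that for every h ∈ L¹(Q;ℝ) ∩ L^∞(Q;ℝ) and every continuous compactly supported g : ℝ^M → ℝ, ∫_Q h(y) g(U_n(y)) dy → ∫_Q h(y) g(U(y)) dy as n → ∞. Then for every continuous compactly supported g : ℝ^M → ℝ, g(U_n(·)) → g(U(·)) strongly in L²(Q), and in particular g(U_n(·)) → g(U(·)) in Lebesgue measure on Q. -/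
open MeasureTheory Filter Topology

/-- **L² convergence of nonlinear compositions from narrow-type convergence.** If
`∫_Q h(y) g(U n y) dy → ∫_Q h(y) g(U y) dy` for every `h ∈ L¹(Q) ∩ L^∞(Q)` and every
continuous compactly supported `g : ℝ^M → ℝ`, then for every such `g` one has
`g ∘ U n → g ∘ U` strongly in `L²(Q)`, and in particular in Lebesgue measure on `Q`. -/
theorem composition_L2_and_in_measure_convergence (K M : ℕ)
    (Q : Set (EuclideanSpace ℝ (Fin K))) (hQm : MeasurableSet Q)
    (hQb : Bornology.IsBounded Q)
    (U : ℕ → EuclideanSpace ℝ (Fin K) → EuclideanSpace ℝ (Fin M))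
    (Ulim : EuclideanSpace ℝ (Fin K) → EuclideanSpace ℝ (Fin M))
    (hmeas : ∀ n, Measurable (U n)) (hmeaslim : Measurable Ulim)
    (hnarrow : ∀ h : EuclideanSpace ℝ (Fin K) → ℝ,
      Integrable h (volume.restrict Q) → Measurable h → (∃ B, ∀ y, |h y| ≤ B) →
        ∀ g : EuclideanSpace ℝ (Fin M) → ℝ, Continuous g → HasCompactSupport g →
          Tendsto (fun n => ∫ y in Q, h y * g (U n y) ∂volume) atTop
            (𝓝 (∫ y in Q, h y * g (Ulim y) ∂volume))) :
    ∀ g : EuclideanSpace ℝ (Fin M) → ℝ, Continuous g → HasCompactSupport g →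
      Tendsto (fun n => ∫ y in Q, (g (U n y) - g (Ulim y)) ^ 2 ∂volume) atTop (𝓝 0) ∧
      ∀ ε > (0 : ℝ),
        Tendsto (fun n => volume {y ∈ Q | ε < |g (U n y) - g (Ulim y)|}) atTop (𝓝 0) := by
  intro g hg hgc
  have hQfin : volume Q < ⊤ := hQb.measure_lt_top
  haveI : Fact (volume Q < ⊤) := ⟨hQfin⟩
  haveI : IsFiniteMeasure (volume.restrict Q) := Restrict.isFiniteMeasure _
  -- bound for g
  obtain ⟨C, hC⟩ := hgc.exists_bound_of_continuous hg
  -- measurability facts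
  have hmg : ∀ n, Measurable fun y => g (U n y) := fun n => hg.measurable.comp (hmeas n)
  have hmgl : Measurable fun y => g (Ulim y) := hg.measurable.comp hmeaslim
  -- integrability of bounded measurable functions on finite measure
  have hint : ∀ (f : EuclideanSpace ℝ (Fin K) → ℝ) (B : ℝ), Measurable f → (∀ y, |f y| ≤ B) →
      Integrable f (volume.restrict Q) := by
    intro f B hf hb
    exact (integrable_const B).mono' hf.aestronglyMeasurable
      (Filter.Eventually.of_forall fun y => by simpa using hb y)
  have hbd : ∀ a b : EuclideanSpace ℝ (Fin M), |g a * g b| ≤ C * C := by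
    intro a b
    rw [abs_mul]
    exact mul_le_mul (by simpa using hC a) (by simpa using hC b) (abs_nonneg _)
      ((abs_nonneg _).trans (by simpa using hC a))
  -- g * g is continuous with compact support
  have hg2c : Continuous fun x => g x * g x := hg.mul hg
  have hg2s : HasCompactSupport fun x => g x * g x := hgc.mul_left
  -- first limit: ∫ g(Uₙ)² → ∫ g(U)²
  have h1 := hnarrow (fun _ => (1 : ℝ)) (integrable_const 1) measurable_const
    ⟨1, fun _ => by norm_num⟩ (fun x => g x * g x) hg2c hg2s
  simp only [one_mul] at h1
  -- second limit: ∫ g(U) * g(Uₙ) → ∫ g(U)²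
  have h2 := hnarrow (fun y => g (Ulim y))
    (hint _ C hmgl (fun y => hC (Ulim y)))
    hmgl ⟨C, fun y => hC (Ulim y)⟩ g hg hgc
  -- key identity for the integral of the square
  have hI : ∀ n, ∫ y in Q, (g (U n y) - g (Ulim y)) ^ 2 ∂volume
      = (∫ y in Q, g (U n y) * g (U n y) ∂volume)
        - 2 * (∫ y in Q, g (Ulim y) * g (U n y) ∂volume)
        + ∫ y in Q, g (Ulim y) * g (Ulim y) ∂volume := by
    intro n
    have i1 : Integrable (fun y => g (U n y) * g (U n y)) (volume.restrict Q) :=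
      hint _ (C*C) ((hmg n).mul (hmg n)) fun y => hbd _ _
    have i2 : Integrable (fun y => g (Ulim y) * g (U n y)) (volume.restrict Q) :=
      hint _ (C*C) (hmgl.mul (hmg n)) fun y => hbd _ _
    have i3 : Integrable (fun y => g (Ulim y) * g (Ulim y)) (volume.restrict Q) :=
      hint _ (C*C) (hmgl.mul hmgl) fun y => hbd _ _
    have : (fun y => (g (U n y) - g (Ulim y)) ^ 2)
        = fun y => (g (U n y) * g (U n y) - 2 * (g (Ulim y) * g (U n y)))
          + g (Ulim y) * g (Ulim y) := by
      funext y; ring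
    rw [this, integral_add
        (show Integrable (fun y => g (U n y) * g (U n y) - 2 * (g (Ulim y) * g (U n y)))
            (volume.restrict Q) from i1.sub (i2.const_mul 2)) i3,
      integral_sub i1 (i2.const_mul 2), integral_const_mul]
  -- L² convergence
  have hL2 : Tendsto (fun n => ∫ y in Q, (g (U n y) - g (Ulim y)) ^ 2 ∂volume) atTop (𝓝 0) := by
    have h3 := (h1.sub (h2.const_mul 2)).add
      (tendsto_const_nhds (x := ∫ y in Q, g (Ulim y) * g (Ulim y) ∂volume))
    simp only [hI]
    convert h3 using 2
    ring
  refine ⟨hL2, fun ε hε => ?_⟩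
  have hε2 : (0 : ℝ) < ε ^ 2 := by positivity
  -- Chebyshev
  have key : ∀ n, (volume {y ∈ Q | ε < |g (U n y) - g (Ulim y)|}).toReal
      ≤ (ε ^ 2)⁻¹ * ∫ y in Q, (g (U n y) - g (Ulim y)) ^ 2 ∂volume := by
    intro n
    have hmono : volume {y ∈ Q | ε < |g (U n y) - g (Ulim y)|}
        ≤ (volume.restrict Q) {y | ε ^ 2 ≤ (g (U n y) - g (Ulim y)) ^ 2} := by
      rw [Measure.restrict_apply' hQm]
      refine measure_mono fun y hy => ?_
      refine ⟨?_, hy.1⟩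
      have h1' : ε ≤ |g (U n y) - g (Ulim y)| := hy.2.le
      have := pow_le_pow_left₀ hε.le h1' 2
      simpa [sq_abs] using this
    have hint2 : Integrable (fun y => (g (U n y) - g (Ulim y)) ^ 2) (volume.restrict Q) := by
      have heq : (fun y => (g (U n y) - g (Ulim y)) ^ 2)
          = fun y => (g (U n y) * g (U n y) - 2 * (g (Ulim y) * g (U n y)))
            + g (Ulim y) * g (Ulim y) := by funext y; ring
      rw [heq]
      exact ((hint _ (C*C) ((hmg n).mul (hmg n)) fun y => hbd _ _).sub
        ((hint _ (C*C) (hmgl.mul (hmg n)) fun y => hbd _ _).const_mul 2)).add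
        (hint _ (C*C) (hmgl.mul hmgl) fun y => hbd _ _)
    have hcheb := mul_meas_ge_le_integral_of_nonneg
      (μ := volume.restrict Q) (f := fun y => (g (U n y) - g (Ulim y)) ^ 2)
      (Filter.Eventually.of_forall fun y => sq_nonneg _) hint2 (ε ^ 2)
    have htr : (volume {y ∈ Q | ε < |g (U n y) - g (Ulim y)|}).toReal
        ≤ ((volume.restrict Q) {y | ε ^ 2 ≤ (g (U n y) - g (Ulim y)) ^ 2}).toReal :=
      ENNReal.toReal_mono (measure_ne_top _ _) hmono
    calc (volume {y ∈ Q | ε < |g (U n y) - g (Ulim y)|}).toReal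
        ≤ ((volume.restrict Q) {y | ε ^ 2 ≤ (g (U n y) - g (Ulim y)) ^ 2}).toReal := htr
      _ = (ε ^ 2)⁻¹ * (ε ^ 2 *
            ((volume.restrict Q) {y | ε ^ 2 ≤ (g (U n y) - g (Ulim y)) ^ 2}).toReal) := by
          field_simp
      _ ≤ (ε ^ 2)⁻¹ * ∫ y in Q, (g (U n y) - g (Ulim y)) ^ 2 ∂volume := by
          gcongr
          exact hcheb
  have hne : ∀ n, volume {y ∈ Q | ε < |g (U n y) - g (Ulim y)|} ≠ ⊤ := by
    intro n
    exact ((measure_mono fun y (hy : y ∈ _) => hy.1).trans_lt hQfin).ne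
  rw [← ENNReal.tendsto_toReal_iff hne ENNReal.zero_ne_top]
  simp only [ENNReal.toReal_zero]
  have hub : Tendsto (fun n => (ε ^ 2)⁻¹ * ∫ y in Q, (g (U n y) - g (Ulim y)) ^ 2 ∂volume)
      atTop (𝓝 0) := by
    simpa using hL2.const_mul ((ε ^ 2)⁻¹)
  exact squeeze_zero (fun n => ENNReal.toReal_nonneg) key hub
end

section
/- Let (U_n)_{n≥1} be measurable functions from Q to ℝ^M with sup_n ∫_Q |U_n| dy < ∞, let U : Q → ℝ^M be measurable, and suppose that for every continuous compactly supported g : ℝ^M → ℝ the functions g(U_n(·)) converge to g(U(·)) in Lebesgue measure on Q. Then U_n → U in Lebesgue measure on Q. -/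
open MeasureTheory Filter Topology

lemma euclid_norm_le_of_coord {M : ℕ} (v : EuclideanSpace ℝ (Fin M)) (c : ℝ) (hc : 0 ≤ c)
    (h : ∀ i, |v i| ≤ c) : ‖v‖ ≤ Real.sqrt M * c := by
  rw [EuclideanSpace.norm_eq]
  have hs : ∑ i, ‖v i‖ ^ 2 ≤ ∑ _i : Fin M, c ^ 2 := by
    refine Finset.sum_le_sum fun i _ => ?_
    have := h i
    rw [Real.norm_eq_abs]
    nlinarith [abs_nonneg (v i)]
  calc Real.sqrt (∑ i, ‖v i‖ ^ 2) ≤ Real.sqrt ((M : ℝ) * c ^ 2) := by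
        apply Real.sqrt_le_sqrt; simpa using hs
    _ = Real.sqrt M * c := by
        rw [Real.sqrt_mul (Nat.cast_nonneg M), Real.sqrt_sq hc]

/-- **Convergence in measure of compositions implies convergence in measure.** If the
measurable functions `U n` are bounded in `L¹(Q; ℝ^M)` and `g ∘ U n → g ∘ U` in Lebesgue
measure on `Q` for every continuous compactly supported `g : ℝ^M → ℝ`, then `U n → U` in
Lebesgue measure on `Q`. -/
theorem in_measure_of_compositions_in_measure (K M : ℕ)
    (Q : Set (EuclideanSpace ℝ (Fin K))) (hQm : MeasurableSet Q)
    (hQb : Bornology.IsBounded Q)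
    (U : ℕ → EuclideanSpace ℝ (Fin K) → EuclideanSpace ℝ (Fin M))
    (Ulim : EuclideanSpace ℝ (Fin K) → EuclideanSpace ℝ (Fin M))
    (hmeas : ∀ n, Measurable (U n)) (hmeaslim : Measurable Ulim)
    (hInt : ∀ n, IntegrableOn (U n) Q volume)
    (C : ℝ) (hC : ∀ n, ∫ y in Q, ‖U n y‖ ∂volume ≤ C)
    (hgconv : ∀ g : EuclideanSpace ℝ (Fin M) → ℝ, Continuous g → HasCompactSupport g →
      ∀ ε > (0 : ℝ),
        Tendsto (fun n => volume {y ∈ Q | ε < |g (U n y) - g (Ulim y)|}) atTop (𝓝 0)) :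
    ∀ ε > (0 : ℝ),
      Tendsto (fun n => volume {y ∈ Q | ε < ‖U n y - Ulim y‖}) atTop (𝓝 0) := by
  intro ε hε
  rw [ENNReal.tendsto_nhds_zero]
  intro δ hδ
  -- replace δ by δ' := min δ 1, which is positive and finite
  set δ' : ENNReal := min δ 1 with hδ'def
  have hδ'pos : 0 < δ' := lt_min hδ zero_lt_one
  have hδ'top : δ' ≠ ⊤ := ne_top_of_le_ne_top ENNReal.one_ne_top (min_le_right _ _)
  suffices h : ∀ᶠ n in atTop, volume {y ∈ Q | ε < ‖U n y - Ulim y‖} ≤ δ' by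
    exact h.mono fun n hn => hn.trans (min_le_left _ _)
  have hq4top : δ' / 4 ≠ ⊤ := by
    exact (ENNReal.div_lt_top hδ'top (by norm_num)).ne
  have hq4pos : 0 < δ' / 4 := ENNReal.div_pos hδ'pos.ne' (by norm_num)
  have hC0 : 0 ≤ C := le_trans (integral_nonneg fun y => norm_nonneg _) (hC 0)
  have hQfin : volume Q < ⊤ := hQb.measure_lt_top
  -- Step 1: choose R₀ with volume {y ∈ Q | R₀ < ‖Ulim y‖} < δ'/4
  obtain ⟨R₀, hR₀⟩ : ∃ R₀ : ℕ, volume {y ∈ Q | (R₀ : ℝ) < ‖Ulim y‖} < δ' / 4 := by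
    have hmS : ∀ k : ℕ, MeasurableSet {y ∈ Q | (k : ℝ) < ‖Ulim y‖} := fun k =>
      hQm.inter (measurableSet_lt measurable_const hmeaslim.norm)
    have hanti : Antitone fun k : ℕ => {y ∈ Q | (k : ℝ) < ‖Ulim y‖} := by
      intro a b hab y hy
      exact ⟨hy.1, lt_of_le_of_lt (by exact_mod_cast Nat.cast_le.mpr hab) hy.2⟩
    have hempty : (⋂ k : ℕ, {y ∈ Q | (k : ℝ) < ‖Ulim y‖}) = ∅ := by
      ext y
      simp only [Set.mem_iInter, Set.mem_setOf_eq, Set.mem_empty_iff_false, iff_false, not_forall]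
      obtain ⟨k, hk⟩ := exists_nat_gt ‖Ulim y‖
      exact ⟨k, fun h => absurd h.2 (not_lt.mpr hk.le)⟩
    have htend := MeasureTheory.tendsto_measure_iInter_atTop
      (μ := volume) (fun k => (hmS k).nullMeasurableSet) hanti
      ⟨0, (lt_of_le_of_lt (measure_mono (Set.sep_subset _ _)) hQfin).ne⟩
    rw [hempty, measure_empty] at htend
    exact (htend.eventually_lt_const hq4pos).exists
  -- Step 2: choose R
  set d : ℝ := (δ' / 4).toReal with hd_def
  have hd : 0 < d := ENNReal.toReal_pos hq4pos.ne' hq4top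
  set R : ℝ := max (R₀ : ℝ) ((C + 1) / d) with hRdef
  have hRpos : 0 < R := lt_of_lt_of_le (div_pos (by linarith) hd) (le_max_right _ _)
  have hAsmall : volume {y ∈ Q | R < ‖Ulim y‖} ≤ δ' / 4 := by
    refine le_trans (measure_mono fun y hy => ?_) hR₀.le
    exact ⟨hy.1, lt_of_le_of_lt (le_max_left _ _) hy.2⟩
  -- Step 3: Markov for U n
  have hBsmall : ∀ n, volume {y ∈ Q | R < ‖U n y‖} ≤ δ' / 4 := by
    intro n
    have hlin : ∫⁻ y in Q, ENNReal.ofReal ‖U n y‖ ∂volume ≤ ENNReal.ofReal C := by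
      rw [← ofReal_integral_eq_lintegral_ofReal (hInt n).norm
        (ae_of_all _ fun y => norm_nonneg _)]
      exact ENNReal.ofReal_le_ofReal (hC n)
    have hmark := meas_ge_le_lintegral_div (μ := volume.restrict Q)
      (f := fun y => ENNReal.ofReal ‖U n y‖)
      ((hmeas n).norm.ennreal_ofReal.aemeasurable)
      (ε := ENNReal.ofReal R) (by simp [hRpos]) ENNReal.ofReal_ne_top
    have hsub : volume {y ∈ Q | R < ‖U n y‖}
        ≤ (volume.restrict Q) {x | ENNReal.ofReal R ≤ ENNReal.ofReal ‖U n x‖} := by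
      rw [Measure.restrict_apply' hQm]
      refine measure_mono fun y hy => ⟨?_, hy.1⟩
      exact ENNReal.ofReal_le_ofReal hy.2.le
    refine hsub.trans (hmark.trans ?_)
    calc (∫⁻ y in Q, ENNReal.ofReal ‖U n y‖ ∂volume) / ENNReal.ofReal R
        ≤ ENNReal.ofReal C / ENNReal.ofReal R := by gcongr
      _ = ENNReal.ofReal (C / R) := (ENNReal.ofReal_div_of_pos hRpos).symm
      _ ≤ ENNReal.ofReal d := by
          apply ENNReal.ofReal_le_ofReal
          rw [div_le_iff₀ hRpos]
          have hR2 : (C + 1) / d ≤ R := le_max_right _ _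
          have : C + 1 ≤ d * R := by
            rw [← div_le_iff₀' hd]; exact hR2
          linarith
      _ = δ' / 4 := ENNReal.ofReal_toReal hq4top
  -- Step 4: the cutoff functions
  set χ : EuclideanSpace ℝ (Fin M) → ℝ := fun x => max 0 (min 1 (R + 1 - ‖x‖)) with hχ
  have hχcont : Continuous χ := by
    apply continuous_const.max
    exact continuous_const.min (continuous_const.sub continuous_norm)
  have hχ1 : ∀ x : EuclideanSpace ℝ (Fin M), ‖x‖ ≤ R → χ x = 1 := by
    intro x hx
    have h1 : (1 : ℝ) ≤ R + 1 - ‖x‖ := by linarith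
    simp [hχ, min_eq_left h1]
  set g : Fin M → EuclideanSpace ℝ (Fin M) → ℝ := fun i x => x i * χ x with hg
  have hgcont : ∀ i, Continuous (g i) := fun i => (EuclideanSpace.proj i).continuous.mul hχcont
  have hgsupp : ∀ i, HasCompactSupport (g i) := by
    intro i
    apply HasCompactSupport.intro (isCompact_closedBall (0 : EuclideanSpace ℝ (Fin M)) (R + 1))
    intro x hx
    have hxn : R + 1 < ‖x‖ := by
      simpa [Metric.mem_closedBall, dist_zero_right] using hx
    have : χ x = 0 := by
      have h0 : R + 1 - ‖x‖ < 0 := by linarith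
      have : min 1 (R + 1 - ‖x‖) ≤ 0 := le_trans (min_le_right _ _) h0.le
      simp [hχ, max_eq_left this]
    simp [hg, this]
  -- Step 5: threshold ε'
  set ε' : ℝ := ε / (Real.sqrt M + 1) with hε'def
  have hsqrt : (0 : ℝ) ≤ Real.sqrt M := Real.sqrt_nonneg _
  have hε' : 0 < ε' := div_pos hε (by linarith)
  -- convergence of the sum over coordinates
  have hsum : Tendsto (fun n => ∑ i : Fin M,
      volume {y ∈ Q | ε' < |g i (U n y) - g i (Ulim y)|}) atTop (𝓝 0) := by
    have := tendsto_finset_sum (Finset.univ : Finset (Fin M))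
      (fun i _ => hgconv (g i) (hgcont i) (hgsupp i) ε' hε')
    simpa using this
  have hsumev : ∀ᶠ n in atTop, (∑ i : Fin M,
      volume {y ∈ Q | ε' < |g i (U n y) - g i (Ulim y)|}) ≤ δ' / 4 :=
    (hsum.eventually_lt_const hq4pos).mono fun n hn => hn.le
  -- Step 6: conclusion
  filter_upwards [hsumev] with n hn
  -- inclusion
  have hincl : {y ∈ Q | ε < ‖U n y - Ulim y‖} ⊆
      {y ∈ Q | R < ‖Ulim y‖} ∪ ({y ∈ Q | R < ‖U n y‖} ∪
        ⋃ i : Fin M, {y ∈ Q | ε' < |g i (U n y) - g i (Ulim y)|}) := by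
    intro y hy
    obtain ⟨hyQ, hyε⟩ := hy
    by_cases h1 : R < ‖Ulim y‖
    · exact Or.inl ⟨hyQ, h1⟩
    by_cases h2 : R < ‖U n y‖
    · exact Or.inr (Or.inl ⟨hyQ, h2⟩)
    push_neg at h1 h2
    refine Or.inr (Or.inr ?_)
    have hgU : ∀ i, g i (U n y) - g i (Ulim y) = (U n y - Ulim y) i := by
      intro i
      simp [hg, hχ1 _ h2, hχ1 _ h1]
    by_contra hcon
    simp only [Set.mem_iUnion, Set.mem_setOf_eq, not_exists, not_and, not_lt] at hcon
    have hco : ∀ i, |(U n y - Ulim y) i| ≤ ε' := by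
      intro i
      rw [← hgU i]
      exact hcon i hyQ
    have hnb := euclid_norm_le_of_coord (U n y - Ulim y) ε' hε'.le hco
    have hlt : Real.sqrt M * ε' < ε := by
      rw [hε'def, ← mul_div_assoc, div_lt_iff₀ (by linarith)]
      nlinarith
    linarith
  calc volume {y ∈ Q | ε < ‖U n y - Ulim y‖}
      ≤ volume ({y ∈ Q | R < ‖Ulim y‖}) + (volume {y ∈ Q | R < ‖U n y‖}
          + volume (⋃ i : Fin M, {y ∈ Q | ε' < |g i (U n y) - g i (Ulim y)|})) := by
        refine le_trans (measure_mono hincl) ?_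
        exact le_trans (measure_union_le _ _) (by gcongr; exact measure_union_le _ _)
    _ ≤ δ' / 4 + (δ' / 4 + δ' / 4) := by
        exact add_le_add hAsmall (add_le_add (hBsmall n)
          (le_trans (measure_iUnion_fintype_le volume _) hn))
    _ ≤ δ' := by
        have h4 : δ' / 4 + (δ' / 4 + (δ' / 4 + δ' / 4)) = δ' := by
          rw [show δ' / 4 + (δ' / 4 + (δ' / 4 + δ' / 4)) = 4 * (δ' / 4) by ring]
          exact ENNReal.mul_div_cancel' (by norm_num) (by norm_num)
        calc δ' / 4 + (δ' / 4 + δ' / 4) ≤ δ' / 4 + (δ' / 4 + (δ' / 4 + δ' / 4)) := by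
              gcongr; exact le_self_add
          _ = δ' := h4
end
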